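/- Let M and L be convex bodies in ℝⁿ, g an invertible linear map, and t ∈ ℝⁿ. Then the sets M and gL + t are nonempty-intersecting yet separable by a hyperplane if and only if t lies in the boundary of the Minkowski difference M - gL (i.e., the set {m - gl : m ∈ M, l ∈ L}). -/

import Mathlib

open scoped RealInnerProductSpace

/-- `A` and `B` are separated by the hyperplane `{x | ⟪x, u⟫ = α}` with normal `u ≠ 0`. -/
def SeparatedByHyperplane {n : ℕ} (A B : Set (EuclideanSpace ℝ (Fin n))) : Prop :=
  ∃ u : EuclideanSpace ℝ (Fin n), u ≠ 0 ∧ ∃ α : ℝ,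
    ((∀ x ∈ A, ⟪x, u⟫ ≤ α) ∧ (∀ y ∈ B, α ≤ ⟪y, u⟫)) ∨
    ((∀ x ∈ B, ⟪x, u⟫ ≤ α) ∧ (∀ y ∈ A, α ≤ ⟪y, u⟫))

/-- Supporting hyperplane at a non-interior point of a closed convex set. -/
lemma exists_support {n : ℕ} {D : Set (EuclideanSpace ℝ (Fin n))}
    (hconv : Convex ℝ D) (hcl : IsClosed D) {t : EuclideanSpace ℝ (Fin n)}
    (ht : t ∈ D) (hti : t ∉ interior D) :
    ∃ u : EuclideanSpace ℝ (Fin n), u ≠ 0 ∧ ∀ x ∈ D, ⟪x, u⟫ ≤ ⟪t, u⟫ := by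
  by_cases hi : (interior D).Nonempty
  · obtain ⟨f, hf⟩ := geometric_hahn_banach_open_point hconv.interior isOpen_interior hti
    obtain ⟨y, hy⟩ := hi
    have hle : ∀ x ∈ D, f x ≤ f t := by
      intro x hx
      have key : ∀ θ : ℝ, θ ∈ Set.Ioo (0:ℝ) 1 → θ * f y + (1 - θ) * f x ≤ f t := by
        intro θ hθ
        have hmem : θ • y + (1 - θ) • x ∈ interior D :=
          hconv.combo_interior_closure_mem_interior hy (subset_closure hx)
            hθ.1 (by linarith [hθ.2]) (by ring)
        have := hf _ hmem
        simpa using this.le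
      have htend : Filter.Tendsto (fun θ : ℝ => θ * f y + (1 - θ) * f x)
          (nhdsWithin 0 (Set.Ioo (0:ℝ) 1)) (nhds (f x)) := by
        have : Filter.Tendsto (fun θ : ℝ => θ * f y + (1 - θ) * f x) (nhds 0)
            (nhds ((0:ℝ) * f y + (1 - 0) * f x)) := by
          exact Filter.Tendsto.add ((continuous_id.mul continuous_const).tendsto 0)
            (((continuous_const.sub continuous_id).mul continuous_const).tendsto 0)
        simpa using this.mono_left nhdsWithin_le_nhds
      have hne : (nhdsWithin (0:ℝ) (Set.Ioo (0:ℝ) 1)).NeBot := by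
        apply mem_closure_iff_nhdsWithin_neBot.mp
        rw [closure_Ioo one_ne_zero.symm]
        exact ⟨le_refl 0, zero_le_one⟩
      exact le_of_tendsto htend (Filter.eventually_of_mem self_mem_nhdsWithin key)
    set u := (InnerProductSpace.toDual ℝ (EuclideanSpace ℝ (Fin n))).symm f with hu
    have hfu : ∀ x, f x = ⟪x, u⟫ := by
      intro x
      rw [real_inner_comm]
      exact ((InnerProductSpace.toDual ℝ (EuclideanSpace ℝ (Fin n))).apply_symm_apply f ▸ rfl :
        f x = ⟪u, x⟫)
    refine ⟨u, ?_, fun x hx => by rw [← hfu, ← hfu]; exact hle x hx⟩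
    intro h0
    have : f y < f t := hf y hy
    rw [hfu y, hfu t, h0] at this
    simp at this
  · -- interior empty : D lies in a proper affine subspace
    have hspan : affineSpan ℝ D ≠ ⊤ := by
      intro h
      exact hi (hconv.interior_nonempty_iff_affineSpan_eq_top.mpr h)
    set V := (affineSpan ℝ D).direction with hV
    have hVne : V ≠ ⊤ := fun h => hspan
      ((AffineSubspace.direction_eq_top_iff_of_nonempty ⟨t, subset_affineSpan ℝ D ht⟩).mp h)
    have : Vᗮ ≠ ⊥ := fun h => hVne (Submodule.orthogonal_eq_bot_iff.mp h)
    obtain ⟨u, huV, hu0⟩ := Submodule.exists_mem_ne_zero_of_ne_bot this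
    refine ⟨u, hu0, fun x hx => ?_⟩
    have hxt : x - t ∈ V := by
      have := AffineSubspace.vsub_mem_direction (subset_affineSpan ℝ D hx)
        (subset_affineSpan ℝ D ht)
      simpa using this
    have : ⟪x - t, u⟫ = 0 := (Submodule.mem_orthogonal V u).mp huV _ hxt
    rw [inner_sub_left] at this
    linarith

theorem separable_touching_iff_frontier {n : ℕ}
    (M L : Set (EuclideanSpace ℝ (Fin n)))
    (hMne : M.Nonempty) (hMc : IsCompact M) (hMconv : Convex ℝ M)
    (hLne : L.Nonempty) (hLc : IsCompact L) (hLconv : Convex ℝ L)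
    (g : EuclideanSpace ℝ (Fin n) ≃ₗ[ℝ] EuclideanSpace ℝ (Fin n))
    (t : EuclideanSpace ℝ (Fin n)) :
    ((M ∩ ((fun x => g x + t) '' L)).Nonempty ∧
      SeparatedByHyperplane M ((fun x => g x + t) '' L)) ↔
      t ∈ frontier {x | ∃ m ∈ M, ∃ l ∈ L, x = m - g l} := by
  set D := {x | ∃ m ∈ M, ∃ l ∈ L, x = m - g l} with hD
  have hgc : Continuous g := (g : EuclideanSpace ℝ (Fin n) →ₗ[ℝ]
    EuclideanSpace ℝ (Fin n)).continuous_of_finiteDimensional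
  -- D as a linear image of M ×ˢ L
  set F : (EuclideanSpace ℝ (Fin n) × EuclideanSpace ℝ (Fin n)) →ₗ[ℝ]
      EuclideanSpace ℝ (Fin n) :=
    LinearMap.fst ℝ _ _ - (g : EuclideanSpace ℝ (Fin n) →ₗ[ℝ]
      EuclideanSpace ℝ (Fin n)).comp (LinearMap.snd ℝ _ _) with hF
  have hDeq : D = F '' (M ×ˢ L) := by
    ext x
    simp only [hD, Set.mem_setOf_eq, Set.mem_image, Set.mem_prod, hF, LinearMap.sub_apply,
      LinearMap.fst_apply, LinearMap.comp_apply, LinearMap.snd_apply, LinearMap.coe_coe, Prod.exists]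
    constructor
    · rintro ⟨m, hm, l, hl, rfl⟩; exact ⟨m, l, ⟨hm, hl⟩, rfl⟩
    · rintro ⟨m, l, ⟨hm, hl⟩, rfl⟩; exact ⟨m, hm, l, hl, rfl⟩
  have hDc : IsCompact D := by
    rw [hDeq]
    exact (hMc.prod hLc).image F.continuous_of_finiteDimensional
  have hDconv : Convex ℝ D := by
    rw [hDeq]
    exact (hMconv.prod hLconv).linear_image F
  -- intersection nonempty ↔ t ∈ D
  have hmem : (M ∩ ((fun x => g x + t) '' L)).Nonempty ↔ t ∈ D := by
    constructor
    · rintro ⟨p, hpM, l, hlL, rfl⟩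
      exact ⟨g l + t, hpM, l, hlL, by abel⟩
    · rintro ⟨m, hm, l, hl, ht⟩
      exact ⟨m, hm, l, hl, by rw [ht]; simp⟩
  -- separation + touching ↔ support
  rw [hDc.isClosed.frontier_eq]
  constructor
  · rintro ⟨hne, u, hu0, α, hsep⟩
    have htD : t ∈ D := hmem.mp hne
    -- get ∀ x ∈ D, ⟪x, v⟫ ≤ ⟪t, v⟫ for some v ≠ 0
    have hsupp : ∃ v : EuclideanSpace ℝ (Fin n), v ≠ 0 ∧ ∀ x ∈ D, ⟪x, v⟫ ≤ ⟪t, v⟫ := by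
      rcases hsep with ⟨h1, h2⟩ | ⟨h1, h2⟩
      · refine ⟨u, hu0, ?_⟩
        rintro x ⟨m, hm, l, hl, rfl⟩
        have hA := h1 m hm
        have hB := h2 (g l + t) ⟨l, hl, rfl⟩
        rw [inner_add_left] at hB
        rw [inner_sub_left]
        linarith
      · refine ⟨-u, neg_ne_zero.mpr hu0, ?_⟩
        rintro x ⟨m, hm, l, hl, rfl⟩
        have hA := h2 m hm
        have hB := h1 (g l + t) ⟨l, hl, rfl⟩
        rw [inner_add_left] at hB
        rw [inner_neg_right, inner_neg_right, inner_sub_left]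
        linarith
    obtain ⟨v, hv0, hv⟩ := hsupp
    refine ⟨htD, fun hti => ?_⟩
    obtain ⟨ε, hε, hball⟩ := Metric.isOpen_iff.mp isOpen_interior t hti
    set x := t + (ε / (2 * ‖v‖)) • v with hx
    have hvn : 0 < ‖v‖ := norm_pos_iff.mpr hv0
    have hδ : 0 < ε / (2 * ‖v‖) := div_pos hε (by linarith)
    have hxD : x ∈ D := by
      apply interior_subset
      apply hball
      rw [Metric.mem_ball, hx, dist_eq_norm]
      have : t + (ε / (2 * ‖v‖)) • v - t = (ε / (2 * ‖v‖)) • v := by abel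
      rw [this, norm_smul, Real.norm_eq_abs, abs_of_pos hδ]
      have heq : ε / (2 * ‖v‖) * ‖v‖ = ε / 2 := by field_simp
      rw [heq]; linarith
    have := hv x hxD
    rw [hx, inner_add_left, real_inner_smul_left, real_inner_self_eq_norm_sq] at this
    have := mul_pos hδ (pow_pos hvn 2)
    linarith
  · rintro ⟨htD, hti⟩
    refine ⟨hmem.mpr htD, ?_⟩
    obtain ⟨u, hu0, hu⟩ := exists_support hDconv hDc.isClosed htD hti
    -- key : ∀ m ∈ M, ∀ l ∈ L, ⟪m, u⟫ ≤ ⟪g l + t, u⟫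
    have key : ∀ m ∈ M, ∀ l ∈ L, ⟪m, u⟫ ≤ ⟪(g l : EuclideanSpace ℝ (Fin n)) + t, u⟫ := by
      intro m hm l hl
      have := hu (m - g l) ⟨m, hm, l, hl, rfl⟩
      rw [inner_sub_left] at this
      rw [inner_add_left]
      linarith
    have hcont : Continuous fun x : EuclideanSpace ℝ (Fin n) => ⟪x, u⟫ :=
      continuous_inner.comp (continuous_id.prodMk continuous_const)
    obtain ⟨m₀, hm₀, hmax⟩ := hMc.exists_isMaxOn hMne hcont.continuousOn
    refine ⟨u, hu0, ⟪m₀, u⟫, Or.inl ⟨fun m hm => hmax hm, ?_⟩⟩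
    rintro y ⟨l, hl, rfl⟩
    exact key m₀ hm₀ l hl
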